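/- arXiv:1409.1778 — 2 statements merged into one kernel-verified Lean document; each statement's English description precedes it below -/
import Mathlib

section
/- Fix M ≥ 0. There exists a constant C > 0 (depending only on M) such that for all nonzero ξ, η ∈ ℝ³ and either choice of sign, the operator norm of the product of projection symbols satisfies ‖Π^M_±(ξ) Π^M_∓(η)‖ ≤ C (∠(ξ,η) + ⟨ξ⟩_M^{−1} + ⟨η⟩_M^{−1}), where ‖·‖ denotes the operator norm of a 4×4 complex matrix acting on ℂ⁴. -/
noncomputable section

open Matrix Complex

/-- The four Dirac matrices `γ⁰, γ¹, γ², γ³` (in 2×2 block form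
`γ⁰ = [[I₂,0],[0,−I₂]]`, `γʲ = [[0,σʲ],[−σʲ,0]]` with the Pauli matrices `σʲ`). -/
def diracGamma : Fin 4 → Matrix (Fin 4) (Fin 4) ℂ :=
  ![!![1, 0, 0, 0; 0, 1, 0, 0; 0, 0, -1, 0; 0, 0, 0, -1],
    !![0, 0, 0, 1; 0, 0, 1, 0; 0, -1, 0, 0; -1, 0, 0, 0],
    !![0, 0, 0, -I; 0, 0, I, 0; 0, I, 0, 0; -I, 0, 0, 0],
    !![0, 0, 1, 0; 0, 0, 0, -1; -1, 0, 0, 0; 0, 1, 0, 0]]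

/-- `β := γ⁰`. -/
def diracBeta : Matrix (Fin 4) (Fin 4) ℂ := diracGamma 0

/-- `αʲ := γ⁰ γʲ` for `j = 1,2,3` (indexed by `j : Fin 3`, so `diracAlpha j = γ⁰ γ^(j+1)`). -/
def diracAlpha (j : Fin 3) : Matrix (Fin 4) (Fin 4) ℂ := diracGamma 0 * diracGamma j.succ

/-- `ξ·α := ξ₁α¹ + ξ₂α² + ξ₃α³` for `ξ ∈ ℝ³`. -/
def xiDotAlpha (ξ : EuclideanSpace ℝ (Fin 3)) : Matrix (Fin 4) (Fin 4) ℂ :=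
  ∑ j : Fin 3, (ξ j : ℂ) • diracAlpha j

/-- The Japanese bracket `⟨ξ⟩_M := √(|ξ|² + M²)`. -/
def jbracket (M : ℝ) (ξ : EuclideanSpace ℝ (Fin 3)) : ℝ :=
  Real.sqrt (‖ξ‖ ^ 2 + M ^ 2)

/-- The projection symbols `Π^M_s(ξ) := ½[I₄ + s ⟨ξ⟩_M^{−1}(ξ·α + Mβ)]` for a sign `s = ±1`. -/
def projSymbol (M s : ℝ) (ξ : EuclideanSpace ℝ (Fin 3)) : Matrix (Fin 4) (Fin 4) ℂ :=
  (2⁻¹ : ℂ) • ((1 : Matrix (Fin 4) (Fin 4) ℂ) +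
    ((s * (jbracket M ξ)⁻¹ : ℝ) : ℂ) • (xiDotAlpha ξ + (M : ℂ) • diracBeta))


/-- The operator norm of a 4×4 complex matrix acting on `ℂ⁴` (with the Euclidean norm). -/
def matrixOpNorm (A : Matrix (Fin 4) (Fin 4) ℂ) : ℝ :=
  ‖Matrix.toEuclideanCLM (𝕜 := ℂ) A‖

/-! ### Auxiliary material for the proof -/

namespace ProjBoundAux

set_option maxHeartbeats 1000000
set_option synthInstance.maxHeartbeats 1000000

/-- The matrix `ξ·α + Mβ` in explicit form. -/
def Dmat (m x y z : ℝ) : Matrix (Fin 4) (Fin 4) ℂ :=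
  !![(m:ℂ), 0, (z:ℂ), (x:ℂ) - I*(y:ℂ);
     0, (m:ℂ), (x:ℂ) + I*(y:ℂ), -(z:ℂ);
     (z:ℂ), (x:ℂ) - I*(y:ℂ), -(m:ℂ), 0;
     (x:ℂ) + I*(y:ℂ), -(z:ℂ), 0, -(m:ℂ)]

lemma diracAlpha0 : diracAlpha 0 = !![0,0,0,1; 0,0,1,0; 0,1,0,0; 1,0,0,0] := by
  show diracGamma 0 * diracGamma 1 = _
  simp only [diracGamma]
  ext i j
  fin_cases i <;> fin_cases j <;>
    simp [Matrix.mul_apply, Fin.sum_univ_four, Matrix.vecHead, Matrix.vecTail]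

lemma diracAlpha1 : diracAlpha 1 = !![0,0,0,-I; 0,0,I,0; 0,-I,0,0; I,0,0,0] := by
  show diracGamma 0 * diracGamma 2 = _
  simp only [diracGamma]
  ext i j
  fin_cases i <;> fin_cases j <;>
    simp [Matrix.mul_apply, Fin.sum_univ_four, Matrix.vecHead, Matrix.vecTail]

lemma diracAlpha2 : diracAlpha 2 = !![0,0,1,0; 0,0,0,-1; 1,0,0,0; 0,-1,0,0] := by
  show diracGamma 0 * diracGamma 3 = _
  simp only [diracGamma]
  ext i j
  fin_cases i <;> fin_cases j <;>
    simp [Matrix.mul_apply, Fin.sum_univ_four, Matrix.vecHead, Matrix.vecTail]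

lemma Dmat_eq (M : ℝ) (ξ : EuclideanSpace ℝ (Fin 3)) :
    xiDotAlpha ξ + (M : ℂ) • diracBeta = Dmat M (ξ 0) (ξ 1) (ξ 2) := by
  rw [xiDotAlpha, Fin.sum_univ_three, diracAlpha0, diracAlpha1, diracAlpha2]
  show _ + (M:ℂ) • diracGamma 0 = _
  simp only [diracGamma]
  ext i j
  fin_cases i <;> fin_cases j <;>
    simp [Dmat, Matrix.add_apply, Matrix.smul_apply, smul_eq_mul,
      Matrix.vecHead, Matrix.vecTail] <;> ring

lemma Dmat_smul (c m x y z : ℝ) :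
    ((c : ℝ) : ℂ) • Dmat m x y z = Dmat (c*m) (c*x) (c*y) (c*z) := by
  ext i j
  fin_cases i <;> fin_cases j <;>
    simp [Dmat, Matrix.vecHead, Matrix.vecTail] <;> push_cast <;> ring

lemma Dmat_sub (m x y z m' x' y' z' : ℝ) :
    Dmat m x y z - Dmat m' x' y' z' = Dmat (m-m') (x-x') (y-y') (z-z') := by
  ext i j
  fin_cases i <;> fin_cases j <;>
    simp [Dmat, Matrix.vecHead, Matrix.vecTail] <;> push_cast <;> ring

lemma Dmat_mul_self (m x y z : ℝ) :
    Dmat m x y z * Dmat m x y z = ((m^2+x^2+y^2+z^2 : ℝ) : ℂ) • 1 := by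
  ext i j
  fin_cases i <;> fin_cases j <;>
    simp [Dmat, Matrix.mul_apply, Fin.sum_univ_four, Matrix.one_apply,
      Matrix.vecHead, Matrix.vecTail] <;>
    push_cast <;> ring_nf <;> simp [Complex.I_sq] <;> ring

lemma Dmat_star (m x y z : ℝ) : star (Dmat m x y z) = Dmat m x y z := by
  ext i j
  rw [Matrix.star_apply]
  fin_cases i <;> fin_cases j <;>
    simp [Dmat, Matrix.vecHead, Matrix.vecTail, Complex.ext_iff]

lemma opNorm_mul_le (A B : Matrix (Fin 4) (Fin 4) ℂ) :
    matrixOpNorm (A * B) ≤ matrixOpNorm A * matrixOpNorm B := by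
  unfold matrixOpNorm
  rw [_root_.map_mul]
  exact norm_mul_le _ _

lemma opNorm_nonneg (A : Matrix (Fin 4) (Fin 4) ℂ) : 0 ≤ matrixOpNorm A :=
  norm_nonneg _

lemma opNorm_smul (c : ℂ) (A : Matrix (Fin 4) (Fin 4) ℂ) :
    matrixOpNorm (c • A) = ‖c‖ * matrixOpNorm A := by
  unfold matrixOpNorm
  rw [_root_.map_smul,
    norm_smul (α := ℂ) (β := EuclideanSpace ℂ (Fin 4) →L[ℂ] EuclideanSpace ℂ (Fin 4)) c _]

lemma opNorm_one : matrixOpNorm (1 : Matrix (Fin 4) (Fin 4) ℂ) = 1 := by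
  unfold matrixOpNorm
  rw [_root_.map_one, norm_one]

lemma opNorm_add_le (A B : Matrix (Fin 4) (Fin 4) ℂ) :
    matrixOpNorm (A + B) ≤ matrixOpNorm A + matrixOpNorm B := by
  unfold matrixOpNorm
  rw [_root_.map_add]
  exact norm_add_le _ _

lemma opNorm_Dmat (m x y z : ℝ) :
    matrixOpNorm (Dmat m x y z) = Real.sqrt (m^2+x^2+y^2+z^2) := by
  have h : matrixOpNorm (Dmat m x y z) * matrixOpNorm (Dmat m x y z)
      = m^2+x^2+y^2+z^2 := by
    unfold matrixOpNorm
    rw [← CStarRing.norm_star_mul_self, ← map_star, ← _root_.map_mul,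
      Dmat_star, Dmat_mul_self, _root_.map_smul, _root_.map_one,
      norm_smul (α := ℂ) (β := EuclideanSpace ℂ (Fin 4) →L[ℂ] EuclideanSpace ℂ (Fin 4)) _ _,
      norm_one, mul_one, Complex.norm_real, Real.norm_eq_abs,
      _root_.abs_of_nonneg (by positivity : (0:ℝ) ≤ m ^ 2 + x ^ 2 + y ^ 2 + z ^ 2)]
  rw [← h]
  exact (Real.sqrt_mul_self (norm_nonneg _)).symm

lemma sqrt_add_le (a b : ℝ) (ha : 0 ≤ a) (hb : 0 ≤ b) :
    Real.sqrt (a + b) ≤ Real.sqrt a + Real.sqrt b := by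
  have h : a + b ≤ (Real.sqrt a + Real.sqrt b)^2 := by
    nlinarith [Real.sq_sqrt ha, Real.sq_sqrt hb, Real.sqrt_nonneg a, Real.sqrt_nonneg b,
      mul_nonneg (Real.sqrt_nonneg a) (Real.sqrt_nonneg b)]
  calc Real.sqrt (a + b) ≤ Real.sqrt ((Real.sqrt a + Real.sqrt b)^2) := Real.sqrt_le_sqrt h
    _ = Real.sqrt a + Real.sqrt b := Real.sqrt_sq (by positivity)

lemma chord_le_angle {u v : EuclideanSpace ℝ (Fin 3)} (hu : ‖u‖ = 1) (hv : ‖v‖ = 1) :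
    ‖u - v‖ ≤ InnerProductGeometry.angle u v := by
  have hcos := InnerProductGeometry.cos_angle u v
  rw [hu, hv, mul_one, div_one] at hcos
  have h1 : ‖u - v‖^2 = 2 - 2 * Real.cos (InnerProductGeometry.angle u v) := by
    rw [norm_sub_sq_real, hu, hv, hcos]; ring
  have h2 := Real.one_sub_sq_div_two_le_cos (x := InnerProductGeometry.angle u v)
  have h3 := InnerProductGeometry.angle_nonneg u v
  nlinarith [norm_nonneg (u - v)]

lemma jbracket_pos {M : ℝ} {ξ : EuclideanSpace ℝ (Fin 3)} (hξ : ξ ≠ 0) :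
    0 < jbracket M ξ := by
  have h : 0 < ‖ξ‖ := norm_pos_iff.mpr hξ
  exact Real.sqrt_pos.mpr (by positivity)

lemma norm_le_jbracket (M : ℝ) (ξ : EuclideanSpace ℝ (Fin 3)) : ‖ξ‖ ≤ jbracket M ξ := by
  rw [jbracket]
  calc ‖ξ‖ = Real.sqrt (‖ξ‖^2) := (Real.sqrt_sq (norm_nonneg _)).symm
    _ ≤ _ := Real.sqrt_le_sqrt (by nlinarith [sq_nonneg M])

lemma jbracket_le (M : ℝ) (hM : 0 ≤ M) (ξ : EuclideanSpace ℝ (Fin 3)) :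
    jbracket M ξ ≤ ‖ξ‖ + M := by
  rw [jbracket]
  calc Real.sqrt (‖ξ‖^2 + M^2) ≤ Real.sqrt ((‖ξ‖ + M)^2) := by
        apply Real.sqrt_le_sqrt
        nlinarith [norm_nonneg ξ]
    _ = ‖ξ‖ + M := Real.sqrt_sq (by positivity)

lemma unit_approx {M : ℝ} (hM : 0 ≤ M) {ξ : EuclideanSpace ℝ (Fin 3)} (hξ : ξ ≠ 0) :
    ‖(jbracket M ξ)⁻¹ • ξ - ‖ξ‖⁻¹ • ξ‖ ≤ M * (jbracket M ξ)⁻¹ := by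
  have hξn : 0 < ‖ξ‖ := norm_pos_iff.mpr hξ
  have hJ : 0 < jbracket M ξ := jbracket_pos hξ
  have ha : (0:ℝ) ≤ (jbracket M ξ)⁻¹ := by positivity
  have hap : (jbracket M ξ)⁻¹ ≤ ‖ξ‖⁻¹ :=
    inv_anti₀ hξn (norm_le_jbracket M ξ)
  have haJ : (jbracket M ξ)⁻¹ * jbracket M ξ = 1 := inv_mul_cancel₀ hJ.ne'
  have hpx : ‖ξ‖⁻¹ * ‖ξ‖ = 1 := inv_mul_cancel₀ hξn.ne'
  have key := jbracket_le M hM ξ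
  rw [← sub_smul, norm_smul, Real.norm_eq_abs, abs_of_nonpos (by linarith)]
  nlinarith [mul_le_mul_of_nonneg_left key ha]

lemma vec_bound {M : ℝ} (hM : 0 ≤ M) {ξ η : EuclideanSpace ℝ (Fin 3)}
    (hξ : ξ ≠ 0) (hη : η ≠ 0) :
    ‖(jbracket M ξ)⁻¹ • ξ - (jbracket M η)⁻¹ • η‖ ≤
      InnerProductGeometry.angle ξ η + M * (jbracket M ξ)⁻¹ + M * (jbracket M η)⁻¹ := by
  have hξn : 0 < ‖ξ‖ := norm_pos_iff.mpr hξ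
  have hηn : 0 < ‖η‖ := norm_pos_iff.mpr hη
  have hu : ‖(‖ξ‖⁻¹ • ξ : EuclideanSpace ℝ (Fin 3))‖ = 1 := by
    rw [norm_smul, Real.norm_eq_abs, abs_of_pos (by positivity), inv_mul_cancel₀ hξn.ne']
  have hv : ‖(‖η‖⁻¹ • η : EuclideanSpace ℝ (Fin 3))‖ = 1 := by
    rw [norm_smul, Real.norm_eq_abs, abs_of_pos (by positivity), inv_mul_cancel₀ hηn.ne']
  have hangle : InnerProductGeometry.angle (‖ξ‖⁻¹ • ξ) ((‖η‖⁻¹ • η : EuclideanSpace ℝ (Fin 3)))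
      = InnerProductGeometry.angle ξ η := by
    rw [InnerProductGeometry.angle_smul_left_of_pos _ _ (by positivity),
      InnerProductGeometry.angle_smul_right_of_pos _ _ (by positivity)]
  have hmid : ‖(‖ξ‖⁻¹ • ξ - ‖η‖⁻¹ • η : EuclideanSpace ℝ (Fin 3))‖ ≤
      InnerProductGeometry.angle ξ η := by
    rw [← hangle]; exact chord_le_angle hu hv
  have h1 := unit_approx hM hξ
  have h2 := unit_approx hM hη
  calc ‖(jbracket M ξ)⁻¹ • ξ - (jbracket M η)⁻¹ • η‖
      = ‖((jbracket M ξ)⁻¹ • ξ - ‖ξ‖⁻¹ • ξ) + ((‖ξ‖⁻¹ • ξ - ‖η‖⁻¹ • η)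
          + (‖η‖⁻¹ • η - (jbracket M η)⁻¹ • η))‖ := by
        congr 1
        abel
    _ ≤ ‖(jbracket M ξ)⁻¹ • ξ - ‖ξ‖⁻¹ • ξ‖
          + (‖(‖ξ‖⁻¹ • ξ - ‖η‖⁻¹ • η : EuclideanSpace ℝ (Fin 3))‖
          + ‖(‖η‖⁻¹ • η - (jbracket M η)⁻¹ • η : EuclideanSpace ℝ (Fin 3))‖) :=
        (norm_add_le _ _).trans (by gcongr; exact norm_add_le _ _)
    _ ≤ M * (jbracket M ξ)⁻¹ + (InnerProductGeometry.angle ξ η + M * (jbracket M η)⁻¹) := by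
        gcongr
        rw [norm_sub_rev]
        exact h2
    _ = _ := by ring

lemma norm_sq_coords (ξ : EuclideanSpace ℝ (Fin 3)) :
    ‖ξ‖^2 = (ξ 0)^2 + (ξ 1)^2 + (ξ 2)^2 := by
  rw [EuclideanSpace.norm_eq, Real.sq_sqrt (by positivity)]
  simp [Fin.sum_univ_three, Real.norm_eq_abs, sq_abs]

lemma opNorm_D (M : ℝ) (ξ : EuclideanSpace ℝ (Fin 3)) :
    matrixOpNorm (Dmat M (ξ 0) (ξ 1) (ξ 2)) = jbracket M ξ := by
  rw [opNorm_Dmat, jbracket, norm_sq_coords]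
  ring_nf

lemma opNorm_projSymbol_le {M s : ℝ} (hs : s = 1 ∨ s = -1)
    {ξ : EuclideanSpace ℝ (Fin 3)} (hξ : ξ ≠ 0) :
    matrixOpNorm (projSymbol M s ξ) ≤ 1 := by
  have hJ : 0 < jbracket M ξ := jbracket_pos hξ
  have habs : |s| = 1 := by rcases hs with h | h <;> simp [h]
  rw [projSymbol, Dmat_eq, opNorm_smul]
  have h1 : matrixOpNorm ((1 : Matrix (Fin 4) (Fin 4) ℂ) +
      ((s * (jbracket M ξ)⁻¹ : ℝ) : ℂ) • Dmat M (ξ 0) (ξ 1) (ξ 2)) ≤ 2 := by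
    refine (opNorm_add_le _ _).trans ?_
    rw [opNorm_one, opNorm_smul, opNorm_D, Complex.norm_real, Real.norm_eq_abs,
      abs_mul, habs, one_mul, _root_.abs_of_nonneg (by positivity : (0:ℝ) ≤ (jbracket M ξ)⁻¹),
      inv_mul_cancel₀ hJ.ne']
    norm_num
  calc ‖(2⁻¹ : ℂ)‖ * matrixOpNorm _ ≤ ‖(2⁻¹ : ℂ)‖ * 2 := by
        apply mul_le_mul_of_nonneg_left h1 (norm_nonneg _)
    _ = 1 := by norm_num

lemma projSymbol_mul_neg {M s : ℝ} (hs : s = 1 ∨ s = -1)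
    {ξ : EuclideanSpace ℝ (Fin 3)} (hξ : ξ ≠ 0) :
    projSymbol M s ξ * projSymbol M (-s) ξ = 0 := by
  have hJ : 0 < jbracket M ξ := jbracket_pos hξ
  have hξn : 0 < ‖ξ‖ := norm_pos_iff.mpr hξ
  have hrpos : (0:ℝ) < ‖ξ‖^2 + M^2 := by positivity
  have hs2 : s^2 = 1 := by rcases hs with h | h <;> simp [h]
  set c : ℂ := ((s * (jbracket M ξ)⁻¹ : ℝ) : ℂ) with hc
  set D := Dmat M (ξ 0) (ξ 1) (ξ 2) with hD
  have hsum : (M^2 + (ξ 0)^2+(ξ 1)^2+(ξ 2)^2 : ℝ) = ‖ξ‖^2 + M^2 := by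
    rw [norm_sq_coords]; ring
  have hDD : D * D = ((‖ξ‖^2 + M^2 : ℝ) : ℂ) • 1 := by
    rw [hD, Dmat_mul_self, hsum]
  have hreal : (s * (jbracket M ξ)⁻¹) * (s * (jbracket M ξ)⁻¹) * (‖ξ‖^2 + M^2) = 1 := by
    have h1 : jbracket M ξ * jbracket M ξ = ‖ξ‖^2 + M^2 := Real.mul_self_sqrt hrpos.le
    calc (s * (jbracket M ξ)⁻¹) * (s * (jbracket M ξ)⁻¹) * (‖ξ‖^2 + M^2)
        = s^2 * (((jbracket M ξ)⁻¹ * jbracket M ξ) * ((jbracket M ξ)⁻¹ * jbracket M ξ)) := by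
          rw [← h1]; ring
      _ = 1 := by rw [inv_mul_cancel₀ hJ.ne', hs2]; norm_num
  have hcc : c * c * ((‖ξ‖^2 + M^2 : ℝ) : ℂ) = 1 := by
    rw [hc]
    exact_mod_cast congrArg (fun t : ℝ => (t : ℂ)) hreal
  have hneg : ((-s * (jbracket M ξ)⁻¹ : ℝ) : ℂ) = -c := by
    rw [hc]; push_cast; ring
  rw [projSymbol, projSymbol, Dmat_eq, ← hD, ← hc, hneg]
  have expand : ((1 : Matrix (Fin 4) (Fin 4) ℂ) + c • D) * (1 + (-c) • D)
      = 1 - (c*c) • (D * D) := by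
    rw [mul_add, mul_one, mul_smul_comm, add_mul, one_mul, smul_mul_assoc, smul_add, smul_smul]
    have h2 : -c * c = -(c*c) := by ring
    rw [h2, neg_smul, neg_smul]
    abel
  rw [smul_mul_assoc, mul_smul_comm, expand, hDD, smul_smul, smul_smul, hcc, one_smul,
    sub_self, smul_zero]

end ProjBoundAux

open ProjBoundAux in
set_option maxHeartbeats 1000000 in
set_option synthInstance.maxHeartbeats 1000000 in
/-- For fixed `M ≥ 0` there is `C > 0` such that for all nonzero `ξ, η ∈ ℝ³` and either sign,
`‖Π^M_±(ξ) Π^M_∓(η)‖ ≤ C (∠(ξ,η) + ⟨ξ⟩_M^{−1} + ⟨η⟩_M^{−1})`. -/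
theorem projSymbol_product_opposite_sign_bound (M : ℝ) (hM : 0 ≤ M) :
    ∃ C > (0 : ℝ), ∀ ξ η : EuclideanSpace ℝ (Fin 3), ξ ≠ 0 → η ≠ 0 →
      ∀ s : ℝ, s = 1 ∨ s = -1 →
        matrixOpNorm (projSymbol M s ξ * projSymbol M (-s) η) ≤
          C * (InnerProductGeometry.angle ξ η + (jbracket M ξ)⁻¹ + (jbracket M η)⁻¹) := by
  refine ⟨1 + M, by linarith, ?_⟩
  intro ξ η hξ hη s hs
  have hJξ : 0 < jbracket M ξ := jbracket_pos hξ
  have hJη : 0 < jbracket M η := jbracket_pos hη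
  set a : ℝ := (jbracket M ξ)⁻¹ with ha_def
  set b : ℝ := (jbracket M η)⁻¹ with hb_def
  have ha : 0 ≤ a := by positivity
  have hb : 0 ≤ b := by positivity
  have hangle := InnerProductGeometry.angle_nonneg ξ η
  have hs2 : s^2 = 1 := by rcases hs with h | h <;> simp [h]
  set w : EuclideanSpace ℝ (Fin 3) := b • η - a • ξ with hw
  have hwc : ∀ i : Fin 3, w i = b * η i - a * ξ i := by
    intro i
    rw [hw]
    simp
  -- the difference of the two opposite-sign projections at `η` and `ξ`
  have hdiff : projSymbol M (-s) η - projSymbol M (-s) ξ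
      = (2⁻¹ : ℂ) • Dmat (-s*(b*M - a*M)) (-s*(w 0)) (-s*(w 1)) (-s*(w 2)) := by
    rw [projSymbol, projSymbol, Dmat_eq, Dmat_eq, ← smul_sub, add_sub_add_left_eq_sub,
      ← ha_def, ← hb_def, Dmat_smul, Dmat_smul, Dmat_sub]
    simp only [hwc]
    ring_nf
  have hnorm_diff : matrixOpNorm (projSymbol M (-s) η - projSymbol M (-s) ξ)
      ≤ 2⁻¹ * (M*(a+b) + (InnerProductGeometry.angle ξ η + M*a + M*b)) := by
    rw [hdiff, opNorm_smul, opNorm_Dmat]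
    have hsq : ∀ t : ℝ, (-s*t)^2 = t^2 := by
      intro t
      rw [neg_mul, neg_sq, mul_pow, hs2, one_mul]
    rw [hsq, hsq, hsq, hsq]
    have hgrp : ((b*M - a*M)^2 + (w 0)^2 + (w 1)^2 + (w 2)^2 : ℝ)
        = (b*M - a*M)^2 + ((w 0)^2 + (w 1)^2 + (w 2)^2) := by ring
    rw [hgrp]
    have hsplit := sqrt_add_le ((b*M - a*M)^2) ((w 0)^2 + (w 1)^2 + (w 2)^2)
      (by positivity) (by positivity)
    have hwnorm : Real.sqrt ((w 0)^2 + (w 1)^2 + (w 2)^2) = ‖w‖ := by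
      rw [← norm_sq_coords, Real.sqrt_sq (norm_nonneg _)]
    have hwbound : ‖w‖ ≤ InnerProductGeometry.angle ξ η + M*a + M*b := by
      rw [hw, norm_sub_rev]
      exact vec_bound hM hξ hη
    have habs1 : Real.sqrt ((b*M - a*M)^2) ≤ M*(a+b) := by
      rw [Real.sqrt_sq_eq_abs]
      have : |b*M - a*M| ≤ b*M + a*M := by
        refine abs_le.mpr ⟨by nlinarith, by nlinarith⟩
      calc |b*M - a*M| ≤ b*M + a*M := this
        _ = M*(a+b) := by ring
    have hc2 : ‖(2⁻¹ : ℂ)‖ = 2⁻¹ := by norm_num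
    rw [hc2]
    have : Real.sqrt ((b*M - a*M)^2 + ((w 0)^2 + (w 1)^2 + (w 2)^2))
        ≤ M*(a+b) + (InnerProductGeometry.angle ξ η + M*a + M*b) := by
      calc Real.sqrt _ ≤ Real.sqrt ((b*M - a*M)^2)
            + Real.sqrt ((w 0)^2 + (w 1)^2 + (w 2)^2) := hsplit
        _ ≤ M*(a+b) + (InnerProductGeometry.angle ξ η + M*a + M*b) := by
            rw [hwnorm]
            exact add_le_add habs1 hwbound
    linarith
  -- splitting off the vanishing product
  have hsplit2 : projSymbol M s ξ * projSymbol M (-s) η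
      = projSymbol M s ξ * (projSymbol M (-s) η - projSymbol M (-s) ξ) := by
    rw [mul_sub, projSymbol_mul_neg hs hξ, sub_zero]
  calc matrixOpNorm (projSymbol M s ξ * projSymbol M (-s) η)
      = matrixOpNorm (projSymbol M s ξ * (projSymbol M (-s) η - projSymbol M (-s) ξ)) := by
        rw [hsplit2]
    _ ≤ matrixOpNorm (projSymbol M s ξ)
          * matrixOpNorm (projSymbol M (-s) η - projSymbol M (-s) ξ) := opNorm_mul_le _ _
    _ ≤ 1 * matrixOpNorm (projSymbol M (-s) η - projSymbol M (-s) ξ) :=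
        mul_le_mul_of_nonneg_right (opNorm_projSymbol_le hs hξ) (opNorm_nonneg _)
    _ = matrixOpNorm (projSymbol M (-s) η - projSymbol M (-s) ξ) := one_mul _
    _ ≤ 2⁻¹ * (M*(a+b) + (InnerProductGeometry.angle ξ η + M*a + M*b)) := hnorm_diff
    _ ≤ (1 + M) * (InnerProductGeometry.angle ξ η + a + b) := by
        nlinarith [mul_nonneg hM hangle, mul_nonneg hM ha, mul_nonneg hM hb]
end
end

section
/- Fix M ≥ 0. There exists a constant C > 0 (depending only on M) such that for all nonzero ξ, η ∈ ℝ³ and either choice of sign, ‖Π^M_±(ξ) Π^M_±(η)‖ ≤ C (∠(−ξ,η) + ⟨ξ⟩_M^{−1} + ⟨η⟩_M^{−1}), where ‖·‖ denotes the operator norm of a 4×4 complex matrix acting on ℂ⁴. -/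
noncomputable section

open Matrix Complex

open scoped Matrix.Norms.L2Operator

/-!
Write `D_m(ξ) := ξ·α + mβ` (`diracSymbol m ξ`). The anticommutation relations of
`α¹, α², α³, β` give `D_m(ξ)² = ⟨ξ⟩_m²`, and `D_m(ξ)` is Hermitian, so `‖D_m(ξ)‖ = ⟨ξ⟩_m`.
Consequently `‖Π^M_±(ξ)‖ ≤ 1` and `Π^M_s(ξ) Π^M_{-s}(ξ) = 0`, whence
`Π^M_s(ξ) Π^M_s(η) = Π^M_s(ξ) (Π^M_s(η) - Π^M_{-s}(ξ))`. By linearity of `D` in `(m, ξ)` the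
difference is `(s/2) D_m(w)` with `w = ξ/⟨ξ⟩_M + η/⟨η⟩_M` and `m = M (⟨ξ⟩_M⁻¹ + ⟨η⟩_M⁻¹)`,
of norm at most `(|w| + |m|)/2`. Finally `|w|` is at most the chord `|η/|η| - (-ξ)/|ξ||`,
which is bounded by the arc `∠(-ξ, η)`, plus the errors `|M|/⟨ξ⟩_M` and `|M|/⟨η⟩_M` made by
replacing `|ζ|` with `⟨ζ⟩_M`.
-/

lemma sum_smul_mul_self_of_anticomm {ι 𝕜 A : Type*} [Fintype ι] [DecidableEq ι] [Field 𝕜]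
    [CharZero 𝕜] [Ring A] [Algebra 𝕜 A] (c : ι → 𝕜) (a : ι → A)
    (h : ∀ j k, a j * a k + a k * a j = (if j = k then 2 else 0 : 𝕜) • 1) :
    (∑ j, c j • a j) * (∑ j, c j • a j) = (∑ j, c j ^ 2) • 1 := by
  have hswap : ∑ j, ∑ k, (c j * c k) • (a k * a j) = ∑ j, ∑ k, (c j * c k) • (a j * a k) := by
    rw [Finset.sum_comm]
    exact Finset.sum_congr rfl fun j _ => Finset.sum_congr rfl fun k _ => by rw [mul_comm]
  have hsymm : (2 : 𝕜) • ((∑ j, c j • a j) * (∑ j, c j • a j)) =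
      ∑ j, ∑ k, (c j * c k) • (a j * a k + a k * a j) := by
    simp only [Finset.sum_mul_sum, smul_mul_smul_comm, smul_add, Finset.sum_add_distrib, hswap,
      two_smul]
  apply smul_right_injective A (two_ne_zero : (2 : 𝕜) ≠ 0)
  simp only [hsymm, h, smul_smul, ← Finset.sum_smul]
  congr 1
  simp [mul_ite, Finset.mul_sum, sq, mul_comm]

lemma add_smul_mul_self_of_anticomm {R A : Type*} [CommRing R] [Ring A] [Algebra R A]
    {x b : A} (hxb : x * b + b * x = 0) (hb : b * b = 1) (m : R) :
    (x + m • b) * (x + m • b) = x * x + m ^ 2 • 1 := by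
  have hbx : b * x = -(x * b) := eq_neg_of_add_eq_zero_right hxb
  simp only [add_mul, mul_add, smul_mul_assoc, mul_smul_comm, hbx, hb]
  module

lemma half_smul_one_add_mul_half_smul_one_sub {𝕜 A : Type*} [Field 𝕜] [Ring A] [Algebra 𝕜 A]
    {u : A} (hu : u * u = 1) : ((2⁻¹ : 𝕜) • (1 + u)) * ((2⁻¹ : 𝕜) • (1 - u)) = 0 := by
  have h : (1 + u) * (1 - u) = 0 := by
    simp only [add_mul, mul_sub, one_mul, mul_one, hu]
    abel
  rw [smul_mul_smul_comm, h, smul_zero]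

lemma IsSelfAdjoint.norm_eq_sqrt_of_mul_self {𝕜 E : Type*} [RCLike 𝕜] [NormedRing E] [StarRing E]
    [CStarRing E] [Nontrivial E] [NormedAlgebra 𝕜 E] {x : E} (hx : IsSelfAdjoint x) {r : ℝ}
    (hr : 0 ≤ r) (h : x * x = (r : 𝕜) • 1) : ‖x‖ = √r := by
  rw [eq_comm, Real.sqrt_eq_iff_mul_self_eq hr (norm_nonneg x), ← sq, ← hx.norm_mul_self, h,
    norm_smul, norm_one, mul_one, RCLike.norm_ofReal, abs_of_nonneg hr]

lemma InnerProductGeometry.norm_sub_le_angle {V : Type*} [NormedAddCommGroup V]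
    [InnerProductSpace ℝ V] {x y : V} (hx : ‖x‖ = 1) (hy : ‖y‖ = 1) : ‖x - y‖ ≤ angle x y := by
  have hcos := Real.one_sub_sq_div_two_le_cos (x := angle x y)
  have hsq : ‖x - y‖ ^ 2 ≤ angle x y ^ 2 := by
    rw [sq, norm_sub_sq_eq_norm_sq_add_norm_sq_sub_two_mul_norm_mul_norm_mul_cos_angle, hx, hy]
    linarith
  exact (pow_le_pow_iff_left₀ (norm_nonneg _) (angle_nonneg x y) two_ne_zero).mp hsq

lemma norm_inv_smul_sub_inv_norm_smul {E : Type*} [NormedAddCommGroup E] [NormedSpace ℝ E]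
    {x : E} (hx : x ≠ 0) {r : ℝ} (hxr : ‖x‖ ≤ r) : ‖r⁻¹ • x - ‖x‖⁻¹ • x‖ = (r - ‖x‖) / r := by
  have hx' : 0 < ‖x‖ := norm_pos_iff.mpr hx
  have hr : 0 < r := hx'.trans_le hxr
  rw [← sub_smul, norm_smul, Real.norm_eq_abs,
    abs_of_nonpos (sub_nonpos.mpr (inv_anti₀ hx' hxr))]
  field_simp
  ring

lemma jbracket_nonneg (M : ℝ) (ξ : EuclideanSpace ℝ (Fin 3)) : 0 ≤ jbracket M ξ :=
  Real.sqrt_nonneg _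

lemma jbracket_pos {M : ℝ} {ξ : EuclideanSpace ℝ (Fin 3)} (hξ : ξ ≠ 0) : 0 < jbracket M ξ := by
  have := norm_pos_iff.mpr hξ
  unfold jbracket
  positivity

lemma jbracket_sq (M : ℝ) (ξ : EuclideanSpace ℝ (Fin 3)) : jbracket M ξ ^ 2 = ‖ξ‖ ^ 2 + M ^ 2 :=
  Real.sq_sqrt (by positivity)

lemma norm_le_jbracket (M : ℝ) (ξ : EuclideanSpace ℝ (Fin 3)) : ‖ξ‖ ≤ jbracket M ξ :=
  Real.le_sqrt_of_sq_le (by nlinarith [sq_nonneg M])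

lemma jbracket_le_norm_add_abs (M : ℝ) (ξ : EuclideanSpace ℝ (Fin 3)) :
    jbracket M ξ ≤ ‖ξ‖ + |M| :=
  Real.sqrt_le_iff.mpr ⟨by positivity, by nlinarith [sq_abs M, abs_nonneg M, norm_nonneg ξ]⟩

lemma norm_inv_jbracket_smul_add_le (M : ℝ) {ξ η : EuclideanSpace ℝ (Fin 3)} (hξ : ξ ≠ 0)
    (hη : η ≠ 0) :
    ‖(jbracket M ξ)⁻¹ • ξ + (jbracket M η)⁻¹ • η‖ ≤
      InnerProductGeometry.angle (-ξ) η + |M| * (jbracket M ξ)⁻¹ + |M| * (jbracket M η)⁻¹ := by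
  have hchord : ‖‖η‖⁻¹ • η - ‖-ξ‖⁻¹ • -ξ‖ ≤ InnerProductGeometry.angle (-ξ) η := by
    have hξ' : -ξ ≠ 0 := neg_ne_zero.mpr hξ
    rw [InnerProductGeometry.angle_comm,
      ← InnerProductGeometry.angle_smul_left_of_pos _ _ (inv_pos.mpr (norm_pos_iff.mpr hη)),
      ← InnerProductGeometry.angle_smul_right_of_pos _ _ (inv_pos.mpr (norm_pos_iff.mpr hξ'))]
    exact InnerProductGeometry.norm_sub_le_angle (norm_smul_inv_norm hη) (norm_smul_inv_norm hξ')
  have hcorr : ∀ ζ : EuclideanSpace ℝ (Fin 3), ζ ≠ 0 →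
      ‖(jbracket M ζ)⁻¹ • ζ - ‖ζ‖⁻¹ • ζ‖ ≤ |M| * (jbracket M ζ)⁻¹ := fun ζ hζ => by
    rw [norm_inv_smul_sub_inv_norm_smul hζ (norm_le_jbracket M ζ), div_eq_mul_inv]
    exact mul_le_mul_of_nonneg_right (by linarith [jbracket_le_norm_add_abs M ζ])
      (inv_nonneg.mpr (jbracket_nonneg M ζ))
  calc ‖(jbracket M ξ)⁻¹ • ξ + (jbracket M η)⁻¹ • η‖
      = ‖(‖η‖⁻¹ • η - ‖-ξ‖⁻¹ • -ξ) + ((jbracket M ξ)⁻¹ • ξ - ‖ξ‖⁻¹ • ξ) +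
          ((jbracket M η)⁻¹ • η - ‖η‖⁻¹ • η)‖ := by
        rw [norm_neg]
        congr 1
        module
    _ ≤ _ := (norm_add₃_le).trans (add_le_add_three hchord (hcorr ξ hξ) (hcorr η hη))

lemma diracAlpha_eq : diracAlpha = ![!![0, 0, 0, 1; 0, 0, 1, 0; 0, 1, 0, 0; 1, 0, 0, 0],
    !![0, 0, 0, -I; 0, 0, I, 0; 0, -I, 0, 0; I, 0, 0, 0],
    !![0, 0, 1, 0; 0, 0, 0, -1; 1, 0, 0, 0; 0, -1, 0, 0]] := by
  ext j a b
  fin_cases j <;> fin_cases a <;> fin_cases b <;>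
    simp [diracAlpha, diracGamma, Matrix.mul_apply, Fin.sum_univ_four]

lemma diracBeta_eq : diracBeta = !![1, 0, 0, 0; 0, 1, 0, 0; 0, 0, -1, 0; 0, 0, 0, -1] := rfl

set_option maxHeartbeats 1000000 in
lemma diracAlpha_mul_add_mul_swap (j k : Fin 3) :
    diracAlpha j * diracAlpha k + diracAlpha k * diracAlpha j =
      (if j = k then 2 else 0 : ℂ) • 1 := by
  rw [diracAlpha_eq]
  fin_cases j <;> fin_cases k <;> ext a b <;> fin_cases a <;> fin_cases b <;> norm_num

lemma diracAlpha_mul_diracBeta_add (j : Fin 3) :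
    diracAlpha j * diracBeta + diracBeta * diracAlpha j = 0 := by
  rw [diracAlpha_eq, diracBeta_eq]
  fin_cases j <;> ext a b <;> fin_cases a <;> fin_cases b <;> simp

lemma diracBeta_mul_self : diracBeta * diracBeta = 1 := by
  rw [diracBeta_eq]
  ext a b
  fin_cases a <;> fin_cases b <;> simp

lemma diracAlpha_isHermitian (j : Fin 3) : (diracAlpha j).IsHermitian := by
  rw [diracAlpha_eq]
  fin_cases j <;> ext a b <;> fin_cases a <;> fin_cases b <;> simp

lemma diracBeta_isHermitian : diracBeta.IsHermitian := by
  rw [diracBeta_eq]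
  ext a b
  fin_cases a <;> fin_cases b <;> simp

lemma xiDotAlpha_add (ξ η : EuclideanSpace ℝ (Fin 3)) :
    xiDotAlpha (ξ + η) = xiDotAlpha ξ + xiDotAlpha η := by
  simp [xiDotAlpha, add_smul, Finset.sum_add_distrib]

lemma xiDotAlpha_smul (r : ℝ) (ξ : EuclideanSpace ℝ (Fin 3)) :
    xiDotAlpha (r • ξ) = (r : ℂ) • xiDotAlpha ξ := by
  simp only [xiDotAlpha, Finset.smul_sum, smul_smul, PiLp.smul_apply, smul_eq_mul,
    Complex.ofReal_mul]

lemma xiDotAlpha_mul_self (ξ : EuclideanSpace ℝ (Fin 3)) :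
    xiDotAlpha ξ * xiDotAlpha ξ = ((‖ξ‖ ^ 2 : ℝ) : ℂ) • 1 := by
  rw [xiDotAlpha, sum_smul_mul_self_of_anticomm _ _ diracAlpha_mul_add_mul_swap,
    EuclideanSpace.real_norm_sq_eq]
  push_cast
  rfl

lemma xiDotAlpha_mul_diracBeta_add (ξ : EuclideanSpace ℝ (Fin 3)) :
    xiDotAlpha ξ * diracBeta + diracBeta * xiDotAlpha ξ = 0 := by
  simp [xiDotAlpha, Finset.sum_mul, Finset.mul_sum, ← Finset.sum_add_distrib, ← smul_add,
    diracAlpha_mul_diracBeta_add]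

def diracSymbol (m : ℝ) (ξ : EuclideanSpace ℝ (Fin 3)) : Matrix (Fin 4) (Fin 4) ℂ :=
  xiDotAlpha ξ + (m : ℂ) • diracBeta

lemma diracSymbol_mul_self (m : ℝ) (ξ : EuclideanSpace ℝ (Fin 3)) :
    diracSymbol m ξ * diracSymbol m ξ = ((jbracket m ξ ^ 2 : ℝ) : ℂ) • 1 := by
  rw [diracSymbol, add_smul_mul_self_of_anticomm (xiDotAlpha_mul_diracBeta_add ξ)
    diracBeta_mul_self, xiDotAlpha_mul_self, jbracket_sq]
  push_cast
  module

lemma isSelfAdjoint_diracSymbol (m : ℝ) (ξ : EuclideanSpace ℝ (Fin 3)) :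
    IsSelfAdjoint (diracSymbol m ξ) := by
  have hα : ∀ j, IsSelfAdjoint (diracAlpha j) := diracAlpha_isHermitian
  refine .add (isSelfAdjoint_sum _ fun j _ => ?_) ?_
  · exact .smul (Complex.conj_ofReal _) (hα j)
  · exact .smul (Complex.conj_ofReal _) diracBeta_isHermitian

lemma norm_diracSymbol (m : ℝ) (ξ : EuclideanSpace ℝ (Fin 3)) :
    ‖diracSymbol m ξ‖ = jbracket m ξ := by
  rw [(isSelfAdjoint_diracSymbol m ξ).norm_eq_sqrt_of_mul_self (sq_nonneg _)
    (diracSymbol_mul_self m ξ), Real.sqrt_sq (jbracket_nonneg m ξ)]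

lemma projSymbol_eq (M s : ℝ) (ξ : EuclideanSpace ℝ (Fin 3)) :
    projSymbol M s ξ =
      (2⁻¹ : ℂ) • (1 + ((s * (jbracket M ξ)⁻¹ : ℝ) : ℂ) • diracSymbol M ξ) := rfl

lemma projSymbol_mul_projSymbol_neg {M s : ℝ} {ξ : EuclideanSpace ℝ (Fin 3)}
    (hξ : jbracket M ξ ≠ 0) (hs : s ^ 2 = 1) : projSymbol M s ξ * projSymbol M (-s) ξ = 0 := by
  set u := ((s * (jbracket M ξ)⁻¹ : ℝ) : ℂ) • diracSymbol M ξ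
  have hu : u * u = 1 := by
    rw [smul_mul_smul_comm, diracSymbol_mul_self, smul_smul, ← Complex.ofReal_mul,
      ← Complex.ofReal_mul,
      show s * (jbracket M ξ)⁻¹ * (s * (jbracket M ξ)⁻¹) * jbracket M ξ ^ 2 = 1 by
        field_simp; linear_combination hs, Complex.ofReal_one, one_smul]
  have hneg : projSymbol M (-s) ξ = (2⁻¹ : ℂ) • (1 - u) := by
    simp only [projSymbol_eq, u, neg_mul, Complex.ofReal_neg, neg_smul, sub_eq_add_neg]
  rw [projSymbol_eq, hneg]
  exact half_smul_one_add_mul_half_smul_one_sub hu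

lemma norm_projSymbol_le_one (M : ℝ) {s : ℝ} (hs : |s| ≤ 1) (ξ : EuclideanSpace ℝ (Fin 3)) :
    ‖projSymbol M s ξ‖ ≤ 1 := by
  have hj : (jbracket M ξ)⁻¹ * jbracket M ξ ≤ 1 := inv_mul_le_one
  calc ‖projSymbol M s ξ‖ ≤ 2⁻¹ * (1 + |s| * ((jbracket M ξ)⁻¹ * jbracket M ξ)) := by
        rw [projSymbol_eq, norm_smul, show ‖(2⁻¹ : ℂ)‖ = 2⁻¹ by norm_num]
        gcongr
        refine (norm_add_le _ _).trans_eq ?_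
        rw [norm_one, norm_smul, norm_diracSymbol, Complex.norm_real, Real.norm_eq_abs, abs_mul,
          abs_inv, abs_of_nonneg (jbracket_nonneg M ξ), mul_assoc]
    _ ≤ 1 := by nlinarith [abs_nonneg s]

lemma projSymbol_sub_projSymbol_neg (M s : ℝ) (ξ η : EuclideanSpace ℝ (Fin 3)) :
    projSymbol M s η - projSymbol M (-s) ξ =
      ((s / 2 : ℝ) : ℂ) • diracSymbol ((jbracket M ξ)⁻¹ * M + (jbracket M η)⁻¹ * M)
        ((jbracket M ξ)⁻¹ • ξ + (jbracket M η)⁻¹ • η) := by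
  simp only [projSymbol_eq, diracSymbol, xiDotAlpha_add, xiDotAlpha_smul]
  push_cast
  module

lemma norm_projSymbol_sub_projSymbol_neg_le (M : ℝ) {s : ℝ} (hs : |s| ≤ 1)
    (ξ η : EuclideanSpace ℝ (Fin 3)) :
    ‖projSymbol M s η - projSymbol M (-s) ξ‖ ≤
      2⁻¹ * (‖(jbracket M ξ)⁻¹ • ξ + (jbracket M η)⁻¹ • η‖ +
        |M| * ((jbracket M ξ)⁻¹ + (jbracket M η)⁻¹)) := by
  have ha := inv_nonneg.mpr (jbracket_nonneg M ξ)
  have hb := inv_nonneg.mpr (jbracket_nonneg M η)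
  rw [projSymbol_sub_projSymbol_neg, norm_smul, norm_diracSymbol, Complex.norm_real,
    Real.norm_eq_abs, abs_div, abs_two]
  calc |s| / 2 * jbracket _ _ ≤ 1 / 2 * (‖(jbracket M ξ)⁻¹ • ξ + (jbracket M η)⁻¹ • η‖ +
        |(jbracket M ξ)⁻¹ * M + (jbracket M η)⁻¹ * M|) :=
        mul_le_mul (by linarith) (jbracket_le_norm_add_abs _ _) (jbracket_nonneg _ _)
          (by norm_num)
    _ = _ := by
        rw [← add_mul, abs_mul, abs_of_nonneg (add_nonneg ha hb)]
        ring

theorem projSymbol_product_same_sign_bound_general (M : ℝ) :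
    ∃ C > (0 : ℝ), ∀ ξ η : EuclideanSpace ℝ (Fin 3), ξ ≠ 0 → η ≠ 0 →
      ∀ s : ℝ, s = 1 ∨ s = -1 →
        matrixOpNorm (projSymbol M s ξ * projSymbol M s η) ≤
          C * (InnerProductGeometry.angle (-ξ) η + (jbracket M ξ)⁻¹ + (jbracket M η)⁻¹) := by
  refine ⟨|M| + 1, by positivity, fun ξ η hξ hη s hs => ?_⟩
  have hs_abs : |s| = 1 := by rcases hs with rfl | rfl <;> simp
  have hs_sq : s ^ 2 = 1 := by rcases hs with rfl | rfl <;> norm_num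
  have hfactor : projSymbol M s ξ * projSymbol M s η =
      projSymbol M s ξ * (projSymbol M s η - projSymbol M (-s) ξ) := by
    rw [mul_sub, projSymbol_mul_projSymbol_neg (jbracket_pos hξ).ne' hs_sq, sub_zero]
  have hgeo := norm_inv_jbracket_smul_add_le M hξ hη
  have hθ := InnerProductGeometry.angle_nonneg (-ξ) η
  have ha := inv_nonneg.mpr (jbracket_nonneg M ξ)
  have hb := inv_nonneg.mpr (jbracket_nonneg M η)
  calc matrixOpNorm (projSymbol M s ξ * projSymbol M s η)
      = ‖projSymbol M s ξ * (projSymbol M s η - projSymbol M (-s) ξ)‖ := by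
        rw [hfactor]
        rfl
    _ ≤ 1 * (2⁻¹ * (‖(jbracket M ξ)⁻¹ • ξ + (jbracket M η)⁻¹ • η‖ +
          |M| * ((jbracket M ξ)⁻¹ + (jbracket M η)⁻¹))) :=
        norm_mul_le_of_le (norm_projSymbol_le_one M hs_abs.le ξ)
          (norm_projSymbol_sub_projSymbol_neg_le M hs_abs.le ξ η)
    _ ≤ _ := by nlinarith [abs_nonneg M]

/-- For fixed `M ≥ 0` there is `C > 0` such that for all nonzero `ξ, η ∈ ℝ³` and either sign,
`‖Π^M_±(ξ) Π^M_±(η)‖ ≤ C (∠(−ξ,η) + ⟨ξ⟩_M^{−1} + ⟨η⟩_M^{−1})`. -/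
theorem projSymbol_product_same_sign_bound (M : ℝ) (hM : 0 ≤ M) :
    ∃ C > (0 : ℝ), ∀ ξ η : EuclideanSpace ℝ (Fin 3), ξ ≠ 0 → η ≠ 0 →
      ∀ s : ℝ, s = 1 ∨ s = -1 →
        matrixOpNorm (projSymbol M s ξ * projSymbol M s η) ≤
          C * (InnerProductGeometry.angle (-ξ) η + (jbracket M ξ)⁻¹ + (jbracket M η)⁻¹) :=
  projSymbol_product_same_sign_bound_general M
end
end
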